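/- arXiv:1711.11517 — 3 statements merged into one kernel-verified Lean document; each statement's English description precedes it below -/
import Mathlib

section
/- A strongly connected digraph D is λ'-connected if and only if D contains a directed cycle C of length g(D) (the girth of D) such that the digraph D−V(C) contains at least one arc. -/
/-- A digraph on vertex type `V`, given by its adjacency (arc) relation. -/
structure Digr (V : Type) where
  Adj : V → V → Prop

namespace Digr

variable {V : Type}

/-- Reachability by directed paths. -/
def Reach (D : Digr V) : V → V → Prop := Relation.ReflTransGen D.Adj

/-- A digraph is strongly connected if every vertex reaches every other. -/
def StronglyConnected (D : Digr V) : Prop := ∀ u v : V, D.Reach u v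

/-- An oriented graph: no loops and no pair of opposite arcs. -/
def Oriented (D : Digr V) : Prop := ∀ u v : V, D.Adj u v → ¬ D.Adj v u

/-- The digraph contains at least one arc. -/
def HasArc (D : Digr V) : Prop := ∃ u v : V, D.Adj u v

/-- Delete a set of arcs. -/
def delArcs (D : Digr V) (S : Set (V × V)) : Digr V :=
  ⟨fun a b => D.Adj a b ∧ (a, b) ∉ S⟩

/-- Delete a set of vertices (keep arcs avoiding them). -/
def delVerts (D : Digr V) (X : Set V) : Digr V :=
  ⟨fun a b => D.Adj a b ∧ a ∉ X ∧ b ∉ X⟩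

/-- Induced subdigraph on a vertex set. -/
def induce (D : Digr V) (X : Set V) : Digr V :=
  ⟨fun a b => a ∈ X ∧ b ∈ X ∧ D.Adj a b⟩

/-- The induced subdigraph on `X` is strongly connected. -/
def StronglyConnectedOn (D : Digr V) (X : Set V) : Prop :=
  ∀ u ∈ X, ∀ v ∈ X, (D.induce X).Reach u v

/-- Mutual reachability. -/
def MReach (D : Digr V) (u v : V) : Prop := D.Reach u v ∧ D.Reach v u

/-- `X` is a strong component: an equivalence class of mutual reachability. -/
def IsStrongComponent (D : Digr V) (X : Set V) : Prop :=
  ∃ x : V, X = {y | D.MReach x y}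

/-- `S` is a restricted arc-cut: a set of arcs whose deletion leaves a
non-trivial strong component `X` (containing an arc) such that deleting the
vertices of `X` from `D` leaves an arc. -/
def IsRestrictedArcCut (D : Digr V) (S : Set (V × V)) : Prop :=
  (∀ p ∈ S, D.Adj p.1 p.2) ∧
  ∃ X : Set V, (D.delArcs S).IsStrongComponent X ∧
    (∃ u ∈ X, ∃ v ∈ X, (D.delArcs S).Adj u v) ∧
    (D.delVerts X).HasArc

/-- A digraph is λ'-connected if it admits a restricted arc-cut. -/
def LambdaPrimeConnected (D : Digr V) : Prop :=
  ∃ S : Set (V × V), D.IsRestrictedArcCut S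

/-- λ'(D): minimum size of a restricted arc-cut. -/
noncomputable def lambdaPrime (D : Digr V) [Fintype V] : ℕ :=
  sInf {n : ℕ | ∃ S : Finset (V × V), D.IsRestrictedArcCut ↑S ∧ S.card = n}

/-- λ(D): the arc-connectivity, the minimum size of an arc set whose removal
destroys strong connectivity. -/
noncomputable def lambda (D : Digr V) [Fintype V] : ℕ :=
  sInf {n : ℕ | ∃ S : Finset (V × V), (∀ p ∈ S, D.Adj p.1 p.2) ∧
    ¬ (D.delArcs ↑S).StronglyConnected ∧ S.card = n}

/-- The list `l` of distinct vertices forms a directed cycle. -/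
def IsCycleList (D : Digr V) (l : List V) : Prop :=
  ∃ h : l ≠ [], l.Nodup ∧ l.Chain' D.Adj ∧ D.Adj (l.getLast h) (l.head h)

/-- The girth: minimum length of a directed cycle. -/
noncomputable def girth (D : Digr V) : ℕ :=
  sInf {n : ℕ | ∃ l : List V, D.IsCycleList l ∧ l.length = n}

/-- `(u,v,w,z,u)` is a 4-cycle of `D`. -/
def Cycle4 (D : Digr V) (u v w z : V) : Prop := D.IsCycleList [u, v, w, z]

/-- Out-degree. -/
def outDeg (D : Digr V) [Fintype V] [DecidableRel D.Adj] (v : V) : ℕ :=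
  (Finset.univ.filter fun w => D.Adj v w).card

/-- In-degree. -/
def inDeg (D : Digr V) [Fintype V] [DecidableRel D.Adj] (v : V) : ℕ :=
  (Finset.univ.filter fun w => D.Adj w v).card

/-- ξ(D): minimum over girth cycles `C` of
`min (Σ d⁺ − g, Σ d⁻ − g)`. -/
noncomputable def xi (D : Digr V) [Fintype V] [DecidableRel D.Adj] : ℤ :=
  sInf {k : ℤ | ∃ l : List V, D.IsCycleList l ∧ l.length = D.girth ∧
    k = min (((l.map D.outDeg).sum : ℤ) - (D.girth : ℤ))
            (((l.map D.inDeg).sum : ℤ) - (D.girth : ℤ))}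

/-- ∂⁺(X): the set of arcs from `X` to its complement. -/
noncomputable def outBoundary (D : Digr V) [Fintype V] (X : Set V) : Finset (V × V) :=
  (Set.toFinite {p : V × V | p.1 ∈ X ∧ p.2 ∉ X ∧ D.Adj p.1 p.2}).toFinset

/-- ∂⁻(X): the set of arcs from the complement of `X` into `X`. -/
noncomputable def inBoundary (D : Digr V) [Fintype V] (X : Set V) : Finset (V × V) :=
  (Set.toFinite {p : V × V | p.1 ∉ X ∧ p.2 ∈ X ∧ D.Adj p.1 p.2}).toFinset

/-- The list of arcs of a cycle given as a vertex list. -/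
def cycleArcs (l : List V) : List (V × V) := l.zip (l.rotate 1)

end Digr

/-!
A restricted arc-cut leaves a strong component containing an arc, hence a cycle `C'`, and an
arc `uv` avoiding `V(C')`; conversely, deleting all arcs that leave or enter the vertex set of a
cycle `C` is a restricted arc-cut as soon as `D - V(C)` has an arc.

It remains to replace `C'` by a girth cycle. Take `C'` shortest and assume that a girth cycle
`C = τ 0 → ⋯ → τ (g - 1)` meets every arc. Minimality of `g` forces every arc `τ i → τ j` to
be `j = i + 1` and every path `τ i → x → τ j` with `x ∉ C` to have `j ∈ {i + 1, i + 2}`; the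
case `i + 1` would shorten `C'`. Indexing the vertices of `C'` along `C` (a vertex off `C` one
step after its predecessor), the index therefore grows by one along every arc of `C'`. One of
`u, v` is a vertex `τ k` missed by `C'`, so index `k` is only attained right after the single
occurrence of `τ (k - 1)` on `C'`; as it is attained at positions `g` apart, `|C'| ≤ g`.
-/

open Function

theorem List.exists_nodup_isChain_cons_of_relationReflTransGen {α : Type} {r : α → α → Prop}
    {a b : α} (h : Relation.ReflTransGen r a b) :
    ∃ l, IsChain r (a :: l) ∧ getLast (a :: l) (cons_ne_nil _ _) = b ∧ (a :: l).Nodup := by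
  induction h using Relation.ReflTransGen.head_induction_on with
  | refl => exact ⟨[], .singleton b, rfl, nodup_singleton b⟩
  | @head a c hac _ ih =>
    obtain ⟨l, hch, hlast, hnd⟩ := ih
    by_cases ha : a ∈ c :: l
    · obtain ⟨s, t, hst⟩ := append_of_mem ha
      have hsuf : a :: t <:+ c :: l := ⟨s, hst.symm⟩
      refine ⟨t, hch.suffix hsuf, ?_, hnd.sublist hsuf.sublist⟩
      simp_rw [← hlast, hst, getLast_append_of_ne_nil _ (cons_ne_nil _ _)]
    · exact ⟨c :: l, hch.cons_cons hac, by rwa [getLast_cons_cons], nodup_cons.2 ⟨ha, hnd⟩⟩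

theorem ZMod.eq_add_of_val_sub_add_eq {n : ℕ} [NeZero n] {i j : ZMod n} {e : ℕ}
    (h : (i - j).val + e = n) : j = i + e := by
  have := congrArg (Nat.cast : ℕ → ZMod n) h
  push_cast [ZMod.natCast_self, ZMod.natCast_zmod_val] at this
  linear_combination -this

namespace Digr

variable {V : Type} {D : Digr V} {n : ℕ}

theorem exists_isCycleList_of_adj_of_reach {a b : V} (hba : D.Adj b a) (hab : D.Reach a b) :
    ∃ l, D.IsCycleList l ∧ a ∈ l := by
  obtain ⟨l, hch, hlast, hnd⟩ := List.exists_nodup_isChain_cons_of_relationReflTransGen hab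
  exact ⟨a :: l, ⟨List.cons_ne_nil _ _, hnd, hch, hlast ▸ hba⟩, List.mem_cons_self⟩

theorem IsCycleList.of_delArcs {S : Set (V × V)} {l : List V}
    (h : (D.delArcs S).IsCycleList l) : D.IsCycleList l :=
  let ⟨hne, hnd, hch, hclose⟩ := h
  ⟨hne, hnd, hch.imp fun _ _ hab => hab.1, hclose.1⟩

theorem girth_le_length {l : List V} (h : D.IsCycleList l) : D.girth ≤ l.length :=
  Nat.sInf_le ⟨l, h, rfl⟩

theorem exists_girth_cycle {l : List V} (h : D.IsCycleList l) :
    ∃ l₀, D.IsCycleList l₀ ∧ l₀.length = D.girth :=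
  Nat.sInf_mem (s := {n | ∃ l, D.IsCycleList l ∧ l.length = n}) ⟨_, l, h, rfl⟩

def IsCycleMap (D : Digr V) (τ : ZMod n → V) : Prop :=
  Injective τ ∧ ∀ i, D.Adj (τ i) (τ (i + 1))

def segment (τ : ZMod n → V) (j : ZMod n) (d : ℕ) : List V :=
  (List.range (d + 1)).map fun k : ℕ => τ (j + k)

section Segment

variable {τ : ZMod n → V} {j : ZMod n} {d : ℕ}

theorem segment_ne_nil : segment τ j d ≠ [] := by simp [segment]

theorem head_segment : (segment τ j d).head segment_ne_nil = τ j := by simp [segment]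

theorem getLast_segment : (segment τ j d).getLast segment_ne_nil = τ (j + d) := by
  simp [segment]

theorem mem_range_of_mem_segment {x : V} (hx : x ∈ segment τ j d) : x ∈ Set.range τ := by
  obtain ⟨k, -, rfl⟩ := List.mem_map.1 hx
  exact ⟨_, rfl⟩

theorem isChain_segment (hτ : D.IsCycleMap τ) : (segment τ j d).IsChain D.Adj := by
  refine List.isChain_map _ |>.2 <| (List.isChain_range_succ _ _).2 fun k _ => ?_
  simpa [add_assoc] using hτ.2 (j + k)

theorem nodup_segment [NeZero n] (hτ : D.IsCycleMap τ) (hd : d < n) :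
    (segment τ j d).Nodup := by
  refine (List.nodup_range).map_on fun k hk l hl hkl => ?_
  rw [List.mem_range] at hk hl
  have := congrArg ZMod.val (add_left_cancel (hτ.1 hkl))
  rwa [ZMod.val_cast_of_lt (by omega), ZMod.val_cast_of_lt (by omega)] at this

theorem length_segment : (segment τ j d).length = d + 1 := by simp [segment]

theorem IsCycleMap.isCycleList_segment [NeZero n] (hτ : D.IsCycleMap τ) (hd : d < n)
    (hclose : D.Adj (τ (j + d)) (τ j)) : D.IsCycleList (segment τ j d) :=
  ⟨segment_ne_nil, nodup_segment hτ hd, isChain_segment hτ, by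
    rwa [getLast_segment, head_segment]⟩

theorem IsCycleMap.isCycleList_cons_segment [NeZero n] (hτ : D.IsCycleMap τ) (hd : d < n)
    {x : V} (hx : x ∉ Set.range τ) (hin : D.Adj (τ (j + d)) x) (hout : D.Adj x (τ j)) :
    D.IsCycleList (x :: segment τ j d) := by
  refine ⟨List.cons_ne_nil _ _, List.nodup_cons.2 ⟨fun h => hx (mem_range_of_mem_segment h),
    nodup_segment hτ hd⟩, ?_, ?_⟩
  · refine List.isChain_cons.2 ⟨fun y hy => ?_, isChain_segment hτ⟩
    rw [List.head?_eq_some_head segment_ne_nil, head_segment, Option.mem_def,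
      Option.some.injEq] at hy
    exact hy ▸ hout
  · rwa [List.getLast_cons segment_ne_nil, getLast_segment]

end Segment

theorem IsCycleList.exists_isCycleMap {l : List V} (h : D.IsCycleList l) :
    ∃ τ : ZMod l.length → V, D.IsCycleMap τ ∧ ∀ x, x ∈ l ↔ x ∈ Set.range τ := by
  obtain ⟨hne, hnd, hch, hclose⟩ := h
  have : NeZero l.length := ⟨by simpa using hne⟩
  refine ⟨fun i => l[i.val]'(ZMod.val_lt i),
    ⟨fun i j hij => ZMod.val_injective _ ((hnd.getElem_inj_iff).1 hij), fun i => ?_⟩, fun x => ?_⟩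
  · have hval : (i + 1).val = (i.val + 1) % l.length := by
      rw [ZMod.val_add, ZMod.val_one_eq_one_mod, Nat.add_mod_mod]
    have hi := ZMod.val_lt i
    simp only [hval]
    rcases Nat.lt_or_ge (i.val + 1) l.length with hlt | hge
    · simp only [Nat.mod_eq_of_lt hlt]
      exact List.isChain_iff_getElem.1 hch _ hlt
    · have hlast : i.val = l.length - 1 := by omega
      simp only [hlast, Nat.sub_add_cancel (by omega : 1 ≤ l.length), Nat.mod_self]
      simpa [List.getLast_eq_getElem, List.head_eq_getElem] using hclose
  · constructor
    · intro hx
      obtain ⟨k, hk, rfl⟩ := List.getElem_of_mem hx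
      exact ⟨k, by simp [ZMod.val_cast_of_lt hk]⟩
    · rintro ⟨i, rfl⟩
      exact List.getElem_mem _

theorem IsCycleMap.reach [NeZero n] {τ : ZMod n → V} (hτ : D.IsCycleMap τ) (i j : ZMod n) :
    D.Reach (τ i) (τ j) := by
  have hstep : ∀ d : ℕ, D.Reach (τ i) (τ (i + d)) := fun d => by
    induction d with
    | zero => rw [Nat.cast_zero, add_zero]; exact Relation.ReflTransGen.refl
    | succ d ih => exact ih.tail (by simpa [add_assoc] using hτ.2 (i + d))
  simpa using hstep (j - i).val

theorem IsCycleList.reach {l : List V} (h : D.IsCycleList l) {x y : V} (hx : x ∈ l)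
    (hy : y ∈ l) : D.Reach x y := by
  obtain ⟨τ, hτ, hmem⟩ := h.exists_isCycleMap
  have : NeZero l.length := ⟨by simpa using h.1⟩
  obtain ⟨i, rfl⟩ := (hmem x).1 hx
  obtain ⟨j, rfl⟩ := (hmem y).1 hy
  exact hτ.reach i j

section GirthCycle

variable [NeZero n] {τ : ZMod n → V}

theorem IsCycleMap.eq_add_one_of_adj (hτ : D.IsCycleMap τ) (hg : D.girth = n) {i j : ZMod n}
    (h : D.Adj (τ i) (τ j)) : j = i + 1 := by
  have hlen :=
    girth_le_length (hτ.isCycleList_segment (j := j) (ZMod.val_lt (i - j)) (by simpa using h))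
  rw [length_segment, hg] at hlen
  simpa using ZMod.eq_add_of_val_sub_add_eq (e := 1) (by have := ZMod.val_lt (i - j); omega)

theorem IsCycleMap.eq_add_one_or_eq_add_two_of_adj_of_adj (hτ : D.IsCycleMap τ)
    (hg : D.girth = n) {i j : ZMod n} {x : V} (hx : x ∉ Set.range τ) (hin : D.Adj (τ i) x)
    (hout : D.Adj x (τ j)) : j = i + 1 ∨ j = i + 2 := by
  have hlen := girth_le_length
    (hτ.isCycleList_cons_segment (j := j) (ZMod.val_lt (i - j)) hx (by simpa using hin) hout)
  rw [List.length_cons, length_segment, hg] at hlen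
  rcases (show (i - j).val + 1 = n ∨ (i - j).val + 2 = n by have := ZMod.val_lt (i - j); omega)
    with hwrap | hwrap
  · exact Or.inl (by simpa using ZMod.eq_add_of_val_sub_add_eq hwrap)
  · exact Or.inr (by simpa using ZMod.eq_add_of_val_sub_add_eq hwrap)

end GirthCycle

section Winding

variable {g m : ℕ} {τ : ZMod g → V} {c : ZMod m → V}

open Classical in
noncomputable def windingIndex (τ : ZMod g → V) (c : ZMod m → V) (t : ZMod m) : ZMod g :=
  if c t ∈ Set.range τ then invFun τ (c t) else invFun τ (c (t - 1)) + 1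

theorem windingIndex_of_eq (hτ : Injective τ) {t : ZMod m} {i : ZMod g} (h : c t = τ i) :
    windingIndex τ c t = i := by
  simp [windingIndex, h, leftInverse_invFun hτ i]

theorem windingIndex_of_notMem (hτ : Injective τ) {t : ZMod m} {i : ZMod g}
    (h : c t ∉ Set.range τ) (hprev : c (t - 1) = τ i) : windingIndex τ c t = i + 1 := by
  simp [windingIndex, h, hprev, leftInverse_invFun hτ i]

theorem windingIndex_add_one (hτ : Injective τ) (hc : ∀ t, D.Adj (c t) (c (t + 1)))
    (hcover : ∀ a b, D.Adj a b → a ∈ Set.range τ ∨ b ∈ Set.range τ)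
    (hchord : ∀ i j, D.Adj (τ i) (τ j) → j = i + 1)
    (hdetour : ∀ t i j, c (t + 1) ∉ Set.range τ → c t = τ i → c (t + 1 + 1) = τ j → j = i + 2)
    (t : ZMod m) : windingIndex τ c (t + 1) = windingIndex τ c t + 1 := by
  have hprev : ∀ s, c (s + 1) ∉ Set.range τ → c s ∈ Set.range τ := fun s hs =>
    (hcover _ _ (hc s)).resolve_right hs
  by_cases hnext : c (t + 1) ∈ Set.range τ
  · obtain ⟨j, hj⟩ := hnext
    rw [windingIndex_of_eq hτ hj.symm]
    by_cases hcur : c t ∈ Set.range τ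
    · obtain ⟨i, hi⟩ := hcur
      rw [windingIndex_of_eq hτ hi.symm]
      exact hchord i j (hi ▸ hj ▸ hc t)
    · obtain ⟨i, hi⟩ := hprev (t - 1) (by rwa [sub_add_cancel])
      rw [windingIndex_of_notMem hτ hcur hi.symm,
        hdetour (t - 1) i j (by rwa [sub_add_cancel]) hi.symm (by rw [sub_add_cancel, hj])]
      ring
  · obtain ⟨i, hi⟩ := hprev t hnext
    rw [windingIndex_of_eq hτ hi.symm,
      windingIndex_of_notMem hτ hnext (by rw [add_sub_cancel_right, hi])]

theorem apply_sub_one_of_windingIndex_eq (hτ : Injective τ) (hc : ∀ t, D.Adj (c t) (c (t + 1)))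
    (hcover : ∀ a b, D.Adj a b → a ∈ Set.range τ ∨ b ∈ Set.range τ) {k : ZMod g}
    (hk : τ k ∉ Set.range c) {t : ZMod m} (ht : windingIndex τ c t = k) :
    c (t - 1) = τ (k - 1) := by
  have hoff : c t ∉ Set.range τ := by
    rintro ⟨i, hi⟩
    rw [windingIndex_of_eq hτ hi.symm] at ht
    exact hk ⟨t, ht ▸ hi.symm⟩
  obtain ⟨i, hi⟩ := (hcover _ _ (hc (t - 1))).resolve_right (by rwa [sub_add_cancel])
  rw [windingIndex_of_notMem hτ hoff hi.symm] at ht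
  rw [← hi, ← ht, add_sub_cancel_right]

theorem le_of_forall_windingIndex_add_one [NeZero g] (hτ : Injective τ) (hc : D.IsCycleMap c)
    (hcover : ∀ a b, D.Adj a b → a ∈ Set.range τ ∨ b ∈ Set.range τ)
    (hstep : ∀ t, windingIndex τ c (t + 1) = windingIndex τ c t + 1)
    {k : ZMod g} (hk : τ k ∉ Set.range c) : m ≤ g := by
  have hcast : ∀ a : ℕ, windingIndex τ c a = windingIndex τ c 0 + a := fun a => by
    induction a with
    | zero => simp
    | succ a ih => rw [Nat.cast_succ, hstep, ih, Nat.cast_succ, add_assoc]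
  set a := (k - windingIndex τ c 0).val
  have h₁ : windingIndex τ c a = k := by rw [hcast, ZMod.natCast_zmod_val, add_sub_cancel]
  have h₂ : windingIndex τ c (a + g : ℕ) = k := by
    rw [hcast, Nat.cast_add, ZMod.natCast_self, add_zero, ZMod.natCast_zmod_val, add_sub_cancel]
  have := hc.1 ((apply_sub_one_of_windingIndex_eq hτ hc.2 hcover hk h₁).trans
    (apply_sub_one_of_windingIndex_eq hτ hc.2 hcover hk h₂).symm)
  have hdvd : ((g : ℕ) : ZMod m) = 0 := by push_cast at this; linear_combination -this
  exact Nat.le_of_dvd (NeZero.pos g) ((ZMod.natCast_eq_zero_iff _ _).1 hdvd)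

end Winding

theorem IsCycleMap.exists_isCycleList_of_adj_add_two [NeZero m] {p : ZMod m → V}
    (hp : D.IsCycleMap p) (hm : 2 ≤ m) {t : ZMod m} (h : D.Adj (p t) (p (t + 1 + 1))) :
    ∃ l, D.IsCycleList l ∧ l.length + 1 = m ∧ ∀ x ∈ l, x ∈ Set.range p := by
  have hwrap : t + 1 + 1 + ((m - 2 : ℕ) : ZMod m) = t := by
    rw [Nat.cast_sub hm, ZMod.natCast_self]; push_cast; ring
  refine ⟨segment p (t + 1 + 1) (m - 2), hp.isCycleList_segment (by omega) (by rwa [hwrap]),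
    by rw [length_segment]; omega, fun x hx => mem_range_of_mem_segment hx⟩

theorem exists_girth_cycle_delVerts_hasArc {u v : V} (huv : D.Adj u v) (c : List V)
    (hc : D.IsCycleList c) (hu : u ∉ c) (hv : v ∉ c) :
    ∃ l, D.IsCycleList l ∧ l.length = D.girth ∧ (D.delVerts {x | x ∈ l}).HasArc := by
  induction hm : c.length using Nat.strong_induction_on generalizing c with
  | _ m ih =>
    obtain ⟨l₀, hl₀, hl₀g⟩ := exists_girth_cycle hc
    by_cases hdone : (D.delVerts {x | x ∈ l₀}).HasArc
    · exact ⟨l₀, hl₀, hl₀g, hdone⟩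
    rcases (girth_le_length hc).eq_or_lt with hgc | hgc
    · exact ⟨c, hc, hgc.symm, u, v, huv, hu, hv⟩
    obtain ⟨τ, hτ, hτmem⟩ := hl₀.exists_isCycleMap
    obtain ⟨p, hp, hpmem⟩ := hc.exists_isCycleMap
    have : NeZero l₀.length := ⟨by simpa using hl₀.1⟩
    have : NeZero c.length := ⟨by simpa using hc.1⟩
    have hcover : ∀ a b, D.Adj a b → a ∈ Set.range τ ∨ b ∈ Set.range τ := by
      intro a b hab
      by_contra h
      simp only [← hτmem, not_or] at h
      exact hdone ⟨a, b, hab, h.1, h.2⟩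
    -- a detour `τ i → x → τ (i + 1)` of `c` can be replaced by an arc of `τ`
    by_cases hshort : ∃ t i, p (t + 1) ∉ Set.range τ ∧ p t = τ i ∧ p (t + 1 + 1) = τ (i + 1)
    · obtain ⟨t, i, -, hi, hi'⟩ := hshort
      obtain ⟨l, hl, hlen, hlmem⟩ := hp.exists_isCycleList_of_adj_add_two
        (by have := List.length_pos_of_ne_nil hl₀.1; omega) (hi ▸ hi' ▸ hτ.2 i)
      exact ih l.length (by omega) l hl (fun h => hu ((hpmem u).2 (hlmem u h)))
        (fun h => hv ((hpmem v).2 (hlmem v h))) rfl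
    have hstep := windingIndex_add_one hτ.1 hp.2 hcover
      (fun i j => hτ.eq_add_one_of_adj hl₀g.symm) fun t i j hoff hi hj => by
        refine (hτ.eq_add_one_or_eq_add_two_of_adj_of_adj hl₀g.symm hoff (hi ▸ hp.2 t)
          (hj ▸ hp.2 (t + 1))).resolve_left ?_
        rintro rfl
        exact hshort ⟨t, i, hoff, hi, hj⟩
    obtain ⟨k, hk⟩ : ∃ k, τ k ∉ Set.range p := by
      rcases hcover u v huv with ⟨k, hk⟩ | ⟨k, hk⟩
      · exact ⟨k, hk ▸ fun h => hu ((hpmem u).2 h)⟩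
      · exact ⟨k, hk ▸ fun h => hv ((hpmem v).2 h)⟩
    have := le_of_forall_windingIndex_add_one hτ.1 hp hcover hstep hk
    omega

theorem IsCycleList.isRestrictedArcCut {l : List V} (hl : D.IsCycleList l)
    (harc : (D.delVerts {x | x ∈ l}).HasArc) :
    D.IsRestrictedArcCut {p | D.Adj p.1 p.2 ∧ ¬(p.1 ∈ l ∧ p.2 ∈ l)} := by
  set S : Set (V × V) := {p | D.Adj p.1 p.2 ∧ ¬(p.1 ∈ l ∧ p.2 ∈ l)}
  have hadj : ∀ a b, (D.delArcs S).Adj a b ↔ D.Adj a b ∧ a ∈ l ∧ b ∈ l := fun a b => by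
    simp only [delArcs, S, Set.mem_ofPred_eq]
    tauto
  obtain ⟨hne, hnd, hch, hclose⟩ := hl
  have hl' : (D.delArcs S).IsCycleList l :=
    ⟨hne, hnd, hch.imp_of_mem_imp fun a b ha hb hab => (hadj a b).2 ⟨hab, ha, hb⟩,
      (hadj _ _).2 ⟨hclose, List.getLast_mem hne, List.head_mem hne⟩⟩
  refine ⟨fun p hp => hp.1, {x | x ∈ l},
    ⟨l.head hne, Set.ext fun y => ⟨fun hy => ?_, fun hy => ?_⟩⟩,
    ⟨_, List.getLast_mem hne, _, List.head_mem hne, hl'.2.2.2⟩, harc⟩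
  · exact ⟨hl'.reach (List.head_mem hne) hy, hl'.reach hy (List.head_mem hne)⟩
  · rcases Relation.ReflTransGen.cases_head hy.2 with rfl | ⟨z, hyz, -⟩
    · exact List.head_mem hne
    · exact ((hadj y z).1 hyz).2.1

end Digr

theorem stmt1_general {V : Type} (D : Digr V) :
    D.LambdaPrimeConnected ↔
      ∃ l : List V, D.IsCycleList l ∧ l.length = D.girth ∧
        (D.delVerts {x | x ∈ l}).HasArc := by
  constructor
  · rintro ⟨S, -, X, ⟨x₀, rfl⟩, ⟨a, ha, b, hb, hab⟩, u, v, huv, hu, hv⟩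
    obtain ⟨l, hl, hbl⟩ := Digr.exists_isCycleList_of_adj_of_reach hab (hb.2.trans ha.1)
    have hlX : ∀ y ∈ l, (D.delArcs S).MReach x₀ y := fun y hy =>
      ⟨hb.1.trans (hl.reach hbl hy), (hl.reach hy hbl).trans hb.2⟩
    exact Digr.exists_girth_cycle_delVerts_hasArc huv l hl.of_delArcs (fun h => hu (hlX u h))
      (fun h => hv (hlX v h))
  · rintro ⟨l, hl, -, harc⟩
    exact ⟨_, hl.isRestrictedArcCut harc⟩

/-- A strongly connected digraph is λ'-connected iff it has a
girth cycle `C` such that `D − V(C)` contains an arc. -/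
theorem stmt1 {V : Type} [Fintype V] (D : Digr V) (hO : D.Oriented)
    (hS : D.StronglyConnected) :
    D.LambdaPrimeConnected ↔
      ∃ l : List V, D.IsCycleList l ∧ l.length = D.girth ∧
        (D.delVerts {x | x ∈ l}).HasArc :=
  stmt1_general D
end

section
/- Let D be the digraph on vertex set {u,v,w,z,x} ∪ A ∪ B ∪ C (disjoint, possibly empty sets) whose arcs are exactly those of the 4-cycles (u,v,w,z,u) and (u,v,w,x,u), together with u→a→v for all a∈A, v→b→w for all b∈B, and w→c→u for all c∈C. Then D is strongly connected of girth 4 and D is not λ'-connected. -/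
theorem ZMod.val_lt_val_add_one {n : ℕ} [NeZero n] {a : ZMod n} (h : a + 1 ≠ 0) :
    a.val < (a + 1).val := by
  rcases Nat.lt_or_ge (a.val + 1) n with hn | hn
  · rw [ZMod.val_add_of_lt (by rwa [ZMod.val_one'' (by omega)]), ZMod.val_one'' (by omega)]
    omega
  · refine absurd ?_ h
    rw [← ZMod.natCast_zmod_val a, ← Nat.cast_add_one,
      show a.val + 1 = n by have := a.val_lt; omega, ZMod.natCast_self]

namespace Digr

variable {V : Type} {D E : Digr V} {M M' X : Set V} {l : List V} {p q : V}

/-- `M` meets every cycle of `D`, witnessed by a ranking of the vertices that increases along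
every arc not entering `M`. -/
def IsFeedbackSet (D : Digr V) (M : Set V) : Prop :=
  ∃ r : V → ℕ, ∀ s t, D.Adj s t → t ∉ M → r s < r t

theorem IsFeedbackSet.mono (h : D.IsFeedbackSet M) (hED : ∀ s t, E.Adj s t → D.Adj s t)
    (hM : M ⊆ M') : E.IsFeedbackSet M' := by
  obtain ⟨r, hr⟩ := h
  exact ⟨r, fun s t hst ht => hr s t (hED s t hst) fun htM => ht (hM htM)⟩

theorem IsFeedbackSet.exists_mem_of_isCycleList (h : D.IsFeedbackSet M) (hl : D.IsCycleList l) :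
    ∃ m ∈ M, m ∈ l := by
  obtain ⟨r, hr⟩ := h
  obtain ⟨hne, -, hchain, hlast⟩ := hl
  by_contra! hlM
  have hmono : l.IsChain (fun a b => r a ≤ r b) :=
    List.IsChain.imp_of_mem_imp (fun a b _ hb hab => (hr a b hab fun hbM => hlM b hbM hb).le)
      hchain
  have hle := List.relationReflTransGen_of_exists_isChain l hmono hne
  rw [Relation.reflTransGen_eq_self] at hle
  exact (hr _ _ hlast fun hM => hlM _ hM (l.head_mem hne)).not_ge hle

theorem IsFeedbackSet.exists_reach_of_adj_of_reach (h : D.IsFeedbackSet M) (hpq : D.Adj p q)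
    (hqp : D.Reach q p) : ∃ m ∈ M, D.Reach q m ∧ D.Reach m p := by
  obtain ⟨r, hr⟩ := h
  have walk : ∀ t, Relation.ReflTransGen D.Adj q t →
      r q ≤ r t ∨ ∃ m ∈ M, D.Reach q m ∧ D.Reach m t := by
    intro t hqt
    induction hqt with
    | refl => exact Or.inl le_rfl
    | @tail s t hqs hst ih =>
      by_cases ht : t ∈ M
      · exact Or.inr ⟨t, ht, hqs.tail hst, .refl⟩
      · rcases ih with hle | ⟨m, hm, hqm, hms⟩
        · exact Or.inl (hle.trans (hr s t hst ht).le)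
        · exact Or.inr ⟨m, hm, hqm, hms.tail hst⟩
  rcases walk p hqp with hle | hM
  · by_cases hq : q ∈ M
    · exact ⟨q, hq, .refl, hqp⟩
    · exact absurd (hr p q hpq hq) hle.not_gt
  · exact hM

theorem IsFeedbackSet.exists_mem_of_isStrongComponent (h : D.IsFeedbackSet M)
    (hX : D.IsStrongComponent X) (hp : p ∈ X) (hq : q ∈ X) (hpq : D.Adj p q) :
    ∃ m ∈ M, m ∈ X := by
  obtain ⟨x₀, rfl⟩ := hX
  obtain ⟨m, hm, hqm, hmp⟩ := h.exists_reach_of_adj_of_reach hpq (hq.2.trans hp.1)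
  exact ⟨m, hm, (hp.1.trans (.single hpq)).trans hqm, hmp.trans hp.2⟩

theorem not_lambdaPrimeConnected_of_isFeedbackSet (M : Set V)
    (hM : ∀ m ∈ M, D.IsFeedbackSet {m}) (hcover : ∀ s t, D.Adj s t → s ∈ M ∨ t ∈ M) :
    ¬ D.LambdaPrimeConnected := by
  rintro ⟨S, -, X, hX, ⟨p, hp, q, hq, hpq⟩, s, t, hst, hsX, htX⟩
  have hMX : M ⊆ X := fun m hm => by
    have hm' : (D.delArcs S).IsFeedbackSet {m} := (hM m hm).mono (fun _ _ h => h.1) subset_rfl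
    obtain ⟨_, rfl, hmX⟩ := hm'.exists_mem_of_isStrongComponent hX hp hq hpq
    exact hmX
  rcases hcover s t hst with hs | ht
  exacts [hsX (hMX hs), htX (hMX ht)]

theorem IsCycleList.card_le_length {α : Type} [DecidableEq α] (hl : D.IsCycleList l)
    (f : V → α) (K : Finset α) (hK : ∀ k ∈ K, D.IsFeedbackSet {t | f t = k}) :
    K.card ≤ l.length :=
  calc K.card ≤ (l.map f).toFinset.card := Finset.card_le_card fun k hk => by
        obtain ⟨m, hm, hml⟩ := (hK k hk).exists_mem_of_isCycleList hl
        exact List.mem_toFinset.mpr (List.mem_map.mpr ⟨m, hml, hm⟩)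
    _ ≤ (l.map f).length := List.toFinset_card_le _
    _ = l.length := List.length_map _

theorem girth_eq_of_isCycleList (hl : D.IsCycleList l)
    (hmin : ∀ l', D.IsCycleList l' → l.length ≤ l'.length) : D.girth = l.length :=
  le_antisymm (Nat.sInf_le ⟨l, hl, rfl⟩)
    (le_csInf ⟨_, l, hl, rfl⟩ fun _ ⟨l', hl', hlen⟩ => hlen ▸ hmin l' hl')

theorem isFeedbackSet_fiber {n : ℕ} [NeZero n] (f : V → ZMod n) (k : ZMod n)
    (hf : ∀ s t, D.Adj s t → f t = f s + 1 ∨ (f t = f s + 2 ∧ f s + 1 ≠ k)) :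
    D.IsFeedbackSet {t | f t = k} := by
  refine ⟨fun t => (f t - k).val, fun s t hst ht => ?_⟩
  show (f s - k).val < (f t - k).val
  have ht' : f t - k ≠ 0 := sub_ne_zero.mpr ht
  rcases hf s t hst with h1 | ⟨h2, hjump⟩
  · rw [show f t - k = f s - k + 1 by rw [h1]; ring] at ht' ⊢
    exact ZMod.val_lt_val_add_one ht'
  · have hmid : f s - k + 1 ≠ 0 := by rwa [sub_add_eq_add_sub, sub_ne_zero]
    rw [show f t - k = f s - k + 1 + 1 by rw [h2]; ring] at ht' ⊢
    exact (ZMod.val_lt_val_add_one hmid).trans (ZMod.val_lt_val_add_one ht')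

end Digr

section H3

variable {V : Type} {u v w z x : V} {A B C : Set V}

def IsH3Arc (u v w z x : V) (A B C : Set V) (p q : V) : Prop :=
  (p = u ∧ q = v) ∨ (p = v ∧ q = w) ∨ (p = w ∧ q = z) ∨ (p = z ∧ q = u) ∨
  (p = w ∧ q = x) ∨ (p = x ∧ q = u) ∨
  (p = u ∧ q ∈ A) ∨ (p ∈ A ∧ q = v) ∨
  (p = v ∧ q ∈ B) ∨ (p ∈ B ∧ q = w) ∨
  (p = w ∧ q ∈ C) ∨ (p ∈ C ∧ q = u)

theorem IsH3Arc.mem_or_mem {p q : V} (h : IsH3Arc u v w z x A B C p q) :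
    p ∈ ({u, v, w} : Set V) ∨ q ∈ ({u, v, w} : Set V) := by
  unfold IsH3Arc at h
  rcases h with ⟨rfl, -⟩ | ⟨rfl, -⟩ | ⟨rfl, -⟩ | ⟨-, rfl⟩ | ⟨rfl, -⟩ | ⟨-, rfl⟩ |
    ⟨rfl, -⟩ | ⟨-, rfl⟩ | ⟨rfl, -⟩ | ⟨-, rfl⟩ | ⟨rfl, -⟩ | ⟨-, rfl⟩ <;> simp

theorem Digr.stronglyConnected_of_isH3Arc {D : Digr V}
    (hcov : ∀ t : V, t ∈ ({u, v, w, z, x} : Set V) ∪ A ∪ B ∪ C)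
    (harc : ∀ p q, IsH3Arc u v w z x A B C p q → D.Adj p q) : D.StronglyConnected := by
  have arc : ∀ p q, IsH3Arc u v w z x A B C p q → D.Reach p q := fun p q h =>
    .single (harc p q h)
  have huv : D.Reach u v := arc u v (by simp [IsH3Arc])
  have hvw : D.Reach v w := arc v w (by simp [IsH3Arc])
  have hwu : D.Reach w u := (arc w z (by simp [IsH3Arc])).trans (arc z u (by simp [IsH3Arc]))
  have to_u : ∀ p, D.Reach p u := by
    intro p
    rcases hcov p with (((rfl | rfl | rfl | rfl | rfl) | hp) | hp) | hp
    · exact .refl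
    · exact hvw.trans hwu
    · exact hwu
    · exact arc p u (by simp [IsH3Arc])
    · exact arc p u (by simp [IsH3Arc])
    · exact (arc p v (by simp [IsH3Arc, hp])).trans (hvw.trans hwu)
    · exact (arc p w (by simp [IsH3Arc, hp])).trans hwu
    · exact arc p u (by simp [IsH3Arc, hp])
  have from_u : ∀ q, D.Reach u q := by
    intro q
    rcases hcov q with (((rfl | rfl | rfl | rfl | rfl) | hq) | hq) | hq
    · exact .refl
    · exact huv
    · exact huv.trans hvw
    · exact (huv.trans hvw).trans (arc w q (by simp [IsH3Arc]))
    · exact (huv.trans hvw).trans (arc w q (by simp [IsH3Arc]))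
    · exact arc u q (by simp [IsH3Arc, hq])
    · exact huv.trans (arc v q (by simp [IsH3Arc, hq]))
    · exact (huv.trans hvw).trans (arc w q (by simp [IsH3Arc, hq]))
  exact fun p q => (to_u p).trans (from_u q)

open Classical in
noncomputable def hexLayer (u v w : V) (A B : Set V) (t : V) : ZMod 6 :=
  if t = u then 0 else if t ∈ A then 1 else if t = v then 2 else if t ∈ B then 3
  else if t = w then 4 else 5

theorem hexLayer_eq_zero {t : V} (h : hexLayer u v w A B t = 0) : t = u := by
  unfold hexLayer at h; split_ifs at h <;> first | assumption | exact absurd h (by decide)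

theorem hexLayer_eq_two {t : V} (h : hexLayer u v w A B t = 2) : t = v := by
  unfold hexLayer at h; split_ifs at h <;> first | assumption | exact absurd h (by decide)

theorem hexLayer_eq_four {t : V} (h : hexLayer u v w A B t = 4) : t = w := by
  unfold hexLayer at h; split_ifs at h <;> first | assumption | exact absurd h (by decide)

theorem hexLayer_step {p q : V} (hnd : [u, v, w, z, x].Nodup)
    (hdisj : ∀ t ∈ A ∪ B ∪ C, t ∉ ({u, v, w, z, x} : Set V))
    (hpw : List.Pairwise Disjoint [A, B, C]) (h : IsH3Arc u v w z x A B C p q) :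
    hexLayer u v w A B q = hexLayer u v w A B p + 1 ∨
      (hexLayer u v w A B q = hexLayer u v w A B p + 2 ∧
        (hexLayer u v w A B p = 0 ∨ hexLayer u v w A B p = 2)) := by
  simp only [List.nodup_cons, List.mem_cons, List.not_mem_nil, or_false, not_or,
    List.nodup_nil, and_true] at hnd
  obtain ⟨⟨huv, huw, huz, hux⟩, ⟨hvw, hvz, hvx⟩, ⟨hwz, hwx⟩, -⟩ := hnd
  simp only [List.pairwise_cons, List.mem_cons, List.not_mem_nil, forall_eq_or_imp,
    IsEmpty.forall_iff, implies_true, and_true, List.Pairwise.nil] at hpw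
  obtain ⟨⟨hAB, hAC⟩, hBC⟩ := hpw
  have hsp : ∀ t ∈ ({u, v, w, z, x} : Set V), t ∉ A ∧ t ∉ B ∧ t ∉ C := fun t ht => by
    simpa [not_or, and_assoc] using mt (hdisj t) (not_not.mpr ht)
  simp only [Set.mem_insert_iff, Set.mem_singleton_iff, forall_eq_or_imp, forall_eq] at hsp
  obtain ⟨⟨huA, huB, huC⟩, ⟨hvA, hvB, hvC⟩, ⟨hwA, hwB, hwC⟩, ⟨hzA, hzB, -⟩, ⟨hxA, hxB, -⟩⟩ := hsp
  have hrest : ∀ t, t ≠ u → t ∉ A → t ≠ v → t ∉ B → t ≠ w → hexLayer u v w A B t = 5 := by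
    intro t h1 h2 h3 h4 h5; simp [hexLayer, *]
  have hu : hexLayer u v w A B u = 0 := by simp [hexLayer]
  have hA : ∀ a ∈ A, hexLayer u v w A B a = 1 := fun a ha => by
    simp [hexLayer, ha, ne_of_mem_of_not_mem ha huA]
  have hv : hexLayer u v w A B v = 2 := by simp [hexLayer, Ne.symm huv, hvA]
  have hB : ∀ b ∈ B, hexLayer u v w A B b = 3 := fun b hb => by
    simp [hexLayer, hb, ne_of_mem_of_not_mem hb huB, ne_of_mem_of_not_mem hb hvB,
      Set.disjoint_right.mp hAB hb]
  have hw : hexLayer u v w A B w = 4 := by simp [hexLayer, Ne.symm huw, Ne.symm hvw, hwA, hwB]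
  have hz : hexLayer u v w A B z = 5 :=
    hrest z (Ne.symm huz) hzA (Ne.symm hvz) hzB (Ne.symm hwz)
  have hx : hexLayer u v w A B x = 5 :=
    hrest x (Ne.symm hux) hxA (Ne.symm hvx) hxB (Ne.symm hwx)
  have hC : ∀ c ∈ C, hexLayer u v w A B c = 5 := fun c hc =>
    hrest c (ne_of_mem_of_not_mem hc huC) (Set.disjoint_right.mp hAC hc)
      (ne_of_mem_of_not_mem hc hvC) (Set.disjoint_right.mp hBC hc) (ne_of_mem_of_not_mem hc hwC)
  unfold IsH3Arc at h
  rcases h with ⟨rfl, rfl⟩ | ⟨rfl, rfl⟩ | ⟨rfl, rfl⟩ | ⟨rfl, rfl⟩ | ⟨rfl, rfl⟩ | ⟨rfl, rfl⟩ |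
    ⟨rfl, hq⟩ | ⟨hp, rfl⟩ | ⟨rfl, hq⟩ | ⟨hp, rfl⟩ | ⟨rfl, hq⟩ | ⟨hp, rfl⟩
  · rw [hu, hv]; decide
  · rw [hv, hw]; decide
  · rw [hw, hz]; decide
  · rw [hz, hu]; decide
  · rw [hw, hx]; decide
  · rw [hx, hu]; decide
  · rw [hu, hA q hq]; decide
  · rw [hA p hp, hv]; decide
  · rw [hv, hB q hq]; decide
  · rw [hB p hp, hw]; decide
  · rw [hw, hC q hq]; decide
  · rw [hC p hp, hu]; decide

end H3

/-- A member of the family H₃ is strongly connected of girth 4 and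
not λ'-connected. -/
theorem stmt7 {V : Type} (D : Digr V) (u v w z x : V) (A B C : Set V)
    (hnd : [u, v, w, z, x].Nodup)
    (hdisj : ∀ t ∈ A ∪ B ∪ C, t ∉ ({u, v, w, z, x} : Set V))
    (hpw : List.Pairwise Disjoint [A, B, C])
    (hcov : ∀ t : V, t ∈ ({u, v, w, z, x} : Set V) ∪ A ∪ B ∪ C)
    (hAdj : ∀ p q : V, D.Adj p q ↔
      (p = u ∧ q = v) ∨ (p = v ∧ q = w) ∨ (p = w ∧ q = z) ∨ (p = z ∧ q = u) ∨
      (p = w ∧ q = x) ∨ (p = x ∧ q = u) ∨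
      (p = u ∧ q ∈ A) ∨ (p ∈ A ∧ q = v) ∨
      (p = v ∧ q ∈ B) ∨ (p ∈ B ∧ q = w) ∨
      (p = w ∧ q ∈ C) ∨ (p ∈ C ∧ q = u)) :
    D.StronglyConnected ∧ D.girth = 4 ∧ ¬ D.LambdaPrimeConnected := by
  have hfib : ∀ k ∈ ({0, 2, 4, 5} : Finset (ZMod 6)),
      D.IsFeedbackSet {t | hexLayer u v w A B t = k} := by
    intro k hk
    refine Digr.isFeedbackSet_fiber _ k fun p q hpq =>
      (hexLayer_step hnd hdisj hpw ((hAdj p q).1 hpq)).imp_right fun ⟨h2, hp⟩ => ⟨h2, ?_⟩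
    simp only [Finset.mem_insert, Finset.mem_singleton] at hk
    rcases hp with hp | hp <;> rw [hp] <;> rcases hk with rfl | rfl | rfl | rfl <;> decide
  have hcyc : D.IsCycleList [u, v, w, z] :=
    ⟨List.cons_ne_nil _ _, hnd.sublist (by simp), by show List.IsChain _ _; simp [hAdj],
      by simp [hAdj]⟩
  refine ⟨D.stronglyConnected_of_isH3Arc hcov fun p q => (hAdj p q).2,
    Digr.girth_eq_of_isCycleList hcyc fun l hl => hl.card_le_length _ _ hfib,
    Digr.not_lambdaPrimeConnected_of_isFeedbackSet {u, v, w} ?_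
      fun p q hpq => IsH3Arc.mem_or_mem ((hAdj p q).1 hpq)⟩
  rintro m (rfl | rfl | rfl)
  · exact (hfib 0 (by decide)).mono (fun _ _ h => h) fun _ => hexLayer_eq_zero
  · exact (hfib 2 (by decide)).mono (fun _ _ h => h) fun _ => hexLayer_eq_two
  · exact (hfib 4 (by decide)).mono (fun _ _ h => h) fun _ => hexLayer_eq_four
end

section
/- Let D be a strongly connected digraph of girth 4 containing the 4-cycles (u,v,w,z,u) and (u,v,w,x,u), with x ≠ z. If there exists a vertex a ∉ {u,v,w,x,z} such that z→a ∈ A(D) or a→z ∈ A(D), and d⁺(x) = 1 (so the only out-neighbor of x is u), then D is λ'-connected and λ'(D) ≤ d⁺(u)+d⁺(v)+d⁺(w)+d⁺(z) − 4. -/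
/-! Deleting the arcs `∂⁺(C)` leaving the 4-cycle `C = (u,v,w,x,u)` traps the strong component
of `u` inside `V(C)`, while the arc between `a` and `z` survives outside `V(C)`; so `∂⁺(C)` is a
restricted arc-cut. Every out-arc of `C` other than its four cycle arcs lies in `∂⁺(C)`, which gives
`|∂⁺(C)| ≤ d⁺(u) + d⁺(v) + d⁺(w) + d⁺(x) - 4`, and `d⁺(x) = 1 ≤ d⁺(z)` since `z → u`. -/

namespace Digr

variable {V : Type} {D : Digr V}

theorem mem_outBoundary [Fintype V] {X : Set V} {p : V × V} :
    p ∈ D.outBoundary X ↔ p.1 ∈ X ∧ p.2 ∉ X ∧ D.Adj p.1 p.2 := by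
  simp [outBoundary]

theorem mem_of_reach_delArcs_outBoundary [Fintype V] {X : Set V} {y y' : V} (hy : y ∈ X)
    (h : (D.delArcs (D.outBoundary X)).Reach y y') : y' ∈ X := by
  induction h with
  | refl => exact hy
  | tail _ hbc ih => exact by_contra fun hc => hbc.2 (mem_outBoundary.2 ⟨ih, hc, hbc.1⟩)

theorem reach_delArcs_outBoundary_of_reach_induce [Fintype V] {X : Set V} {y y' : V}
    (h : (D.induce X).Reach y y') : (D.delArcs (D.outBoundary X)).Reach y y' :=
  Relation.ReflTransGen.mono
    (fun _ _ ⟨_, hc, hbc⟩ => ⟨hbc, fun hm => (mem_outBoundary.1 hm).2.1 hc⟩) _ _ h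

theorem StronglyConnectedOn.isRestrictedArcCut_outBoundary [Fintype V] {X : Set V}
    (hX : D.StronglyConnectedOn X) {u v b c : V} (hu : u ∈ X) (hv : v ∈ X) (huv : D.Adj u v)
    (hbc : D.Adj b c) (hb : b ∉ X) (hc : c ∉ X) :
    D.IsRestrictedArcCut (D.outBoundary X) := by
  set D' := D.delArcs (D.outBoundary X)
  have hsub : {y | D'.MReach u y} ⊆ X := fun y hy =>
    mem_of_reach_delArcs_outBoundary hu hy.1
  refine ⟨fun p hp => (mem_outBoundary.1 hp).2.2, {y | D'.MReach u y}, ⟨u, rfl⟩,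
    ⟨u, ⟨.refl, .refl⟩, v, ?_, huv, fun hm => (mem_outBoundary.1 hm).2.1 hv⟩,
    b, c, hbc, fun h => hb (hsub h), fun h => hc (hsub h)⟩
  exact ⟨reach_delArcs_outBoundary_of_reach_induce (hX u hu v hv),
    reach_delArcs_outBoundary_of_reach_induce (hX v hv u hu)⟩

theorem lambdaPrime_le_card [Fintype V] {S : Finset (V × V)} (hS : D.IsRestrictedArcCut S) :
    D.lambdaPrime ≤ S.card :=
  Nat.sInf_le ⟨S, hS, rfl⟩

theorem outDeg_pos [Fintype V] [DecidableRel D.Adj] {y y' : V} (h : D.Adj y y') :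
    0 < D.outDeg y :=
  Finset.card_pos.2 ⟨y', by simpa using h⟩

theorem card_outBoundary_add_card_le_sum_outDeg [Fintype V] [DecidableRel D.Adj]
    (X : Finset V) (C : Finset (V × V)) (hC : ∀ p ∈ C, p.1 ∈ X ∧ p.2 ∈ X ∧ D.Adj p.1 p.2) :
    (D.outBoundary X).card + C.card ≤ ∑ y ∈ X, D.outDeg y := by
  classical
  set A := (X ×ˢ Finset.univ).filter fun p : V × V => D.Adj p.1 p.2
  have hA : A.card = ∑ y ∈ X, D.outDeg y := by
    simp only [A, outDeg, Finset.card_filter, Finset.sum_product]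
  have hdisj : Disjoint (D.outBoundary X) C := Finset.disjoint_left.2 fun p hp hpC =>
    (mem_outBoundary.1 hp).2.1 (hC p hpC).2.1
  have hsub : D.outBoundary X ∪ C ⊆ A := by
    intro p hp
    rcases Finset.mem_union.1 hp with hp | hp
    · obtain ⟨h1, -, h3⟩ := mem_outBoundary.1 hp
      simpa [A] using ⟨h1, h3⟩
    · obtain ⟨h1, -, h3⟩ := hC p hp
      simpa [A] using ⟨h1, h3⟩
  rw [← hA, ← Finset.card_union_of_disjoint hdisj]
  exact Finset.card_le_card hsub

theorem cycle4_iff {u v w x : V} : D.Cycle4 u v w x ↔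
    (D.Adj u v ∧ D.Adj v w ∧ D.Adj w x ∧ D.Adj x u) ∧ [u, v, w, x].Nodup := by
  change (∃ _ : [u, v, w, x] ≠ [], _ ∧ List.IsChain D.Adj [u, v, w, x] ∧ D.Adj x u) ↔ _
  simp [List.isChain_cons_cons]
  tauto

theorem Cycle4.stronglyConnectedOn {u v w x : V} (h : D.Cycle4 u v w x) :
    D.StronglyConnectedOn {u, v, w, x} := by
  obtain ⟨⟨huv, hvw, hwx, hxu⟩, -⟩ := cycle4_iff.1 h
  set X : Set V := {u, v, w, x}
  have arc : ∀ {b c}, D.Adj b c → b ∈ X → c ∈ X → (D.induce X).Reach b c :=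
    fun hbc hb hc => .single ⟨hb, hc, hbc⟩
  have ruv := arc huv (by simp [X]) (by simp [X])
  have rvw := arc hvw (by simp [X]) (by simp [X])
  have rwx := arc hwx (by simp [X]) (by simp [X])
  have rxu := arc hxu (by simp [X]) (by simp [X])
  have hu : ∀ y ∈ X, (D.induce X).Reach u y ∧ (D.induce X).Reach y u := by
    rintro y (rfl | rfl | rfl | rfl)
    · exact ⟨.refl, .refl⟩
    · exact ⟨ruv, rvw.trans (rwx.trans rxu)⟩
    · exact ⟨ruv.trans rvw, rwx.trans rxu⟩
    · exact ⟨ruv.trans (rvw.trans rwx), rxu⟩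
  intro y hy y' hy'
  exact Relation.ReflTransGen.trans (hu y hy).2 (hu y' hy').1

theorem Cycle4.card_outBoundary_add_four_le [Fintype V] [DecidableRel D.Adj] {u v w x : V}
    (h : D.Cycle4 u v w x) :
    (D.outBoundary {u, v, w, x}).card + 4 ≤
      D.outDeg u + D.outDeg v + D.outDeg w + D.outDeg x := by
  classical
  obtain ⟨⟨huv, hvw, hwx, hxu⟩, hnd⟩ := cycle4_iff.1 h
  simp only [List.nodup_cons, List.mem_cons, List.not_mem_nil, not_or] at hnd
  obtain ⟨⟨huv', huw', hux', -⟩, ⟨hvw', hvx', -⟩, ⟨hwx', -⟩, -⟩ := hnd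
  have key := card_outBoundary_add_card_le_sum_outDeg (D := D) {u, v, w, x}
    {(u, v), (v, w), (w, x), (x, u)} (by simp [*])
  rw [Finset.card_insert_of_notMem (by simp [*]), Finset.card_insert_of_notMem (by simp [*]),
    Finset.card_insert_of_notMem (by simp [*]), Finset.card_singleton,
    Finset.sum_insert (by simp [*]), Finset.sum_insert (by simp [*]),
    Finset.sum_insert (by simp [*]), Finset.sum_singleton] at key
  push_cast at key
  omega

end Digr

theorem stmt9_general {V : Type} [Fintype V] (D : Digr V) [DecidableRel D.Adj]
    (u v w z x a : V) (hC : D.Cycle4 u v w z) (hC' : D.Cycle4 u v w x)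
    (hxz : x ≠ z) (ha : a ∉ ({u, v, w, x, z} : Set V))
    (haz : D.Adj z a ∨ D.Adj a z) (hx : D.outDeg x = 1) :
    D.LambdaPrimeConnected ∧
      (D.lambdaPrime : ℤ) ≤
        (D.outDeg u + D.outDeg v + D.outDeg w + D.outDeg z : ℤ) - 4 := by
  obtain ⟨⟨-, -, -, hzu⟩, hnd⟩ := Digr.cycle4_iff.1 hC
  obtain ⟨⟨huv, -⟩, -⟩ := Digr.cycle4_iff.1 hC'
  have hzX : z ∉ ({u, v, w, x} : Set V) := by aesop
  have haX : a ∉ ({u, v, w, x} : Set V) := by aesop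
  have hX := hC'.stronglyConnectedOn
  have hcut : D.IsRestrictedArcCut (D.outBoundary {u, v, w, x}) := by
    rcases haz with h | h
    · exact hX.isRestrictedArcCut_outBoundary (by simp) (by simp) huv h hzX haX
    · exact hX.isRestrictedArcCut_outBoundary (by simp) (by simp) huv h haX hzX
  have hcard := hC'.card_outBoundary_add_four_le
  have hz := Digr.outDeg_pos hzu
  have hlam := Digr.lambdaPrime_le_card hcut
  exact ⟨⟨_, hcut⟩, by omega⟩

/-- With two 4-cycles `(u,v,w,z,u)`, `(u,v,w,x,u)`, a vertex `a`
outside adjacent to `z`, and `d⁺(x) = 1`, `D` is λ'-connected and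
`λ'(D) ≤ d⁺u+d⁺v+d⁺w+d⁺z−4`. -/
theorem stmt9 {V : Type} [Fintype V] (D : Digr V) [DecidableRel D.Adj]
    (hO : D.Oriented) (hS : D.StronglyConnected) (hg : D.girth = 4)
    (u v w z x a : V) (hC : D.Cycle4 u v w z) (hC' : D.Cycle4 u v w x)
    (hxz : x ≠ z) (ha : a ∉ ({u, v, w, x, z} : Set V))
    (haz : D.Adj z a ∨ D.Adj a z) (hx : D.outDeg x = 1) :
    D.LambdaPrimeConnected ∧
      (D.lambdaPrime : ℤ) ≤
        (D.outDeg u + D.outDeg v + D.outDeg w + D.outDeg z : ℤ) - 4 :=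
  stmt9_general D u v w z x a hC hC' hxz ha haz hx
end
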